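/- Let m ≥ 1, 0 ≤ r ≤ 2m and 0 ≤ k ≤ m with m−k ≡ r (mod 2). If k < m then the cardinality of Θ^{(r)}_k equals 2·binom(m,(m−r+k)/2)·binom(m,(k+r−m)/2), and if k = m (so that r is even) then the cardinality of Θ^{(r)}_m equals binom(m,r/2)², where for a negative integer b one sets binom(a,b) := 0 (the arguments (m−r+k)/2 and (k+r−m)/2 are understood as integers, possibly negative). -/

import Mathlib

/-!
Among the exponents `0 ≤ u ≤ 4^m - 1` the only collision of `u ↦ ζ^u` is `ζ^0 = ζ^(4^m-1) = 1`.
Both exponents have `O - E = 0`, but their weights `0` and `2m` differ, so `Θ^{(r)}_k` is in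
bijection with the `u < 4^m` satisfying `O(u) + E(u) = 2m - r` and `|O(u) - E(u)| = m - k`.
Splitting `u` into its odd- and even-indexed bits, there are `binom(m,a) binom(m,b)` such `u` with
`O(u) = a` and `E(u) = b`. For `k < m` the pair `(O, E)` is one of two distinct pairs, and for
`k = m` it is forced to be `(m - r/2, m - r/2)`.
-/

/-- `wt₂(u)`: the number of ones among the binary digits `u_0, …, u_{2m-1}` of `u`. -/
def wt2 (m u : ℕ) : ℕ := ((Finset.range (2 * m)).filter fun i => u.testBit i).card

/-- `O(u) = #{0 ≤ i ≤ m-1 : u_{2i+1} = 1}`. -/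
def Ofun (m u : ℕ) : ℕ := ((Finset.range m).filter fun i => u.testBit (2 * i + 1)).card

/-- `E(u) = #{0 ≤ i ≤ m-1 : u_{2i} = 1}`. -/
def Efun (m u : ℕ) : ℕ := ((Finset.range m).filter fun i => u.testBit (2 * i)).card

/-- `Θ_k = {ζ^u : 0 ≤ u ≤ 4^m - 1, |O(u) - E(u)| = m - k}`. -/
def ThetaK {K : Type*} [Monoid K] (m : ℕ) (ζ : K) (k : ℕ) : Set K :=
  {z | ∃ u : ℕ, u ≤ 4 ^ m - 1 ∧ ((Ofun m u : ℤ) - (Efun m u : ℤ)).natAbs = m - k ∧ z = ζ ^ u}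

/-- `Θ^{(r)} = {ζ^u : 0 ≤ u ≤ 4^m - 1, wt₂(u) = 2m - r}`. -/
def ThetaR {K : Type*} [Monoid K] (m : ℕ) (ζ : K) (r : ℕ) : Set K :=
  {z | ∃ u : ℕ, u ≤ 4 ^ m - 1 ∧ wt2 m u = 2 * m - r ∧ z = ζ ^ u}

/-- `binom(a,b)` for an integer `b`, with the convention `binom(a,b) = 0` for `b < 0`. -/
def ibinom (a : ℕ) (b : ℤ) : ℕ := if b < 0 then 0 else a.choose b.toNat

open Finset

lemma Nat.four_pow_eq_two_pow_two_mul (m : ℕ) : 4 ^ m = 2 ^ (2 * m) := by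
  rw [pow_mul]; norm_num

lemma Nat.testBit_sum_two_pow (s : Finset ℕ) (j : ℕ) : (∑ i ∈ s, 2 ^ i).testBit j ↔ j ∈ s := by
  rw [← Nat.mem_bitIndices, ← List.mem_toFinset, Finset.toFinset_bitIndices_sum_two_pow]

lemma Nat.sum_two_pow_lt {s : Finset ℕ} {n : ℕ} (hs : s ⊆ range n) : ∑ i ∈ s, 2 ^ i < 2 ^ n := by
  refine Nat.lt_pow_two_of_testBit _ fun i hi => ?_
  rw [Bool.eq_false_iff, ne_eq, Nat.testBit_sum_two_pow]
  exact fun h => by simpa using (mem_range.mp (hs h)).trans_le hi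

lemma Nat.lt_of_testBit_of_lt_two_pow {u i n : ℕ} (hu : u < 2 ^ n) (hi : u.testBit i) : i < n :=
  (Nat.pow_lt_pow_iff_right (by norm_num)).mp ((Nat.ge_two_pow_of_testBit hi).trans_lt hu)

def oddBits (m u : ℕ) : Finset ℕ := (range m).filter fun i => u.testBit (2 * i + 1)

def evenBits (m u : ℕ) : Finset ℕ := (range m).filter fun i => u.testBit (2 * i)

def interleaveBits (A B : Finset ℕ) : ℕ :=
  ∑ i ∈ A.image (2 * · + 1) ∪ B.image (2 * ·), 2 ^ i

section interleaveBits

variable {m : ℕ} {A B : Finset ℕ}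

lemma testBit_interleaveBits_two_mul_add_one (j : ℕ) :
    (interleaveBits A B).testBit (2 * j + 1) ↔ j ∈ A := by
  simp only [interleaveBits, Nat.testBit_sum_two_pow, mem_union, mem_image]
  constructor
  · rintro (⟨i, hi, h⟩ | ⟨i, -, h⟩) <;> [exact (by omega : i = j) ▸ hi; omega]
  · exact fun h => .inl ⟨j, h, rfl⟩

lemma testBit_interleaveBits_two_mul (j : ℕ) :
    (interleaveBits A B).testBit (2 * j) ↔ j ∈ B := by
  simp only [interleaveBits, Nat.testBit_sum_two_pow, mem_union, mem_image]
  constructor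
  · rintro (⟨i, -, h⟩ | ⟨i, hi, h⟩) <;> [omega; exact (by omega : i = j) ▸ hi]
  · exact fun h => .inr ⟨j, h, rfl⟩

lemma interleaveBits_lt (hA : A ⊆ range m) (hB : B ⊆ range m) : interleaveBits A B < 4 ^ m := by
  rw [Nat.four_pow_eq_two_pow_two_mul]
  refine Nat.sum_two_pow_lt fun j hj => ?_
  simp only [mem_union, mem_image] at hj
  rcases hj with ⟨i, hi, rfl⟩ | ⟨i, hi, rfl⟩
  · have := mem_range.mp (hA hi); rw [mem_range]; omega
  · have := mem_range.mp (hB hi); rw [mem_range]; omega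

lemma oddBits_interleaveBits (hA : A ⊆ range m) : oddBits m (interleaveBits A B) = A := by
  ext i
  simp only [oddBits, mem_filter, testBit_interleaveBits_two_mul_add_one]
  exact ⟨And.right, fun h => ⟨hA h, h⟩⟩

lemma evenBits_interleaveBits (hB : B ⊆ range m) : evenBits m (interleaveBits A B) = B := by
  ext i
  simp only [evenBits, mem_filter, testBit_interleaveBits_two_mul]
  exact ⟨And.right, fun h => ⟨hB h, h⟩⟩

lemma interleaveBits_oddBits_evenBits {u : ℕ} (hu : u < 4 ^ m) :
    interleaveBits (oddBits m u) (evenBits m u) = u := by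
  rw [Nat.four_pow_eq_two_pow_two_mul] at hu
  refine Nat.eq_of_testBit_eq fun j => Bool.eq_iff_iff.mpr ?_
  obtain ⟨i, rfl | rfl⟩ := j.even_or_odd'
  · rw [testBit_interleaveBits_two_mul, evenBits, mem_filter, mem_range]
    exact ⟨And.right, fun h => ⟨by have := Nat.lt_of_testBit_of_lt_two_pow hu h; omega, h⟩⟩
  · rw [testBit_interleaveBits_two_mul_add_one, oddBits, mem_filter, mem_range]
    exact ⟨And.right, fun h => ⟨by have := Nat.lt_of_testBit_of_lt_two_pow hu h; omega, h⟩⟩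

end interleaveBits

lemma card_filter_Ofun_eq_Efun_eq (m a b : ℕ) :
    #{u ∈ range (4 ^ m) | Ofun m u = a ∧ Efun m u = b} = m.choose a * m.choose b := by
  rw [show m.choose a * m.choose b = #(powersetCard a (range m) ×ˢ powersetCard b (range m)) by
    simp]
  refine card_bij' (fun u _ => (oddBits m u, evenBits m u)) (fun p _ => interleaveBits p.1 p.2)
    ?_ ?_ (fun u hu => interleaveBits_oddBits_evenBits (mem_range.mp (mem_filter.mp hu).1)) ?_
  · intro u hu
    simp only [mem_filter] at hu
    simp only [mem_product, mem_powersetCard]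
    exact ⟨⟨filter_subset _ _, hu.2.1⟩, filter_subset _ _, hu.2.2⟩
  · rintro ⟨A, B⟩ hp
    simp only [mem_product, mem_powersetCard] at hp
    refine mem_filter.mpr ⟨mem_range.mpr (interleaveBits_lt hp.1.1 hp.2.1), ?_, ?_⟩
    · change #(oddBits m _) = a
      rw [oddBits_interleaveBits hp.1.1, hp.1.2]
    · change #(evenBits m _) = b
      rw [evenBits_interleaveBits hp.2.1, hp.2.2]
  · rintro ⟨A, B⟩ hp
    simp only [mem_product, mem_powersetCard] at hp
    rw [oddBits_interleaveBits hp.1.1, evenBits_interleaveBits hp.2.1]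

lemma ibinom_natCast (a n : ℕ) : ibinom a n = a.choose n := by
  simp [ibinom]

lemma ibinom_sub_self (a : ℕ) (b : ℤ) : ibinom a (a - b) = ibinom a b := by
  unfold ibinom
  split_ifs with h₁ h₂ h₂
  · rfl
  · exact (Nat.choose_eq_zero_of_lt (by omega)).symm
  · exact Nat.choose_eq_zero_of_lt (by omega)
  · rw [show (a - b : ℤ).toNat = a - b.toNat by omega, Nat.choose_symm (by omega)]

lemma card_filter_Ofun_eq_Efun_eq_of_int (m : ℕ) (a b : ℤ) :
    #{u ∈ range (4 ^ m) | (Ofun m u : ℤ) = a ∧ (Efun m u : ℤ) = b} = ibinom m a * ibinom m b := by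
  have hempty (h : a < 0 ∨ b < 0) :
      {u ∈ range (4 ^ m) | (Ofun m u : ℤ) = a ∧ (Efun m u : ℤ) = b} = ∅ :=
    filter_eq_empty_iff.mpr fun u _ => by omega
  rcases lt_or_ge a 0 with ha | ha
  · simp [hempty (.inl ha), ibinom, ha]
  rcases lt_or_ge b 0 with hb | hb
  · simp [hempty (.inr hb), ibinom, hb]
  lift a to ℕ using ha
  lift b to ℕ using hb
  simp only [Nat.cast_inj, ibinom_natCast, card_filter_Ofun_eq_Efun_eq]

lemma wt2_eq_Ofun_add_Efun (m u : ℕ) : wt2 m u = Ofun m u + Efun m u := by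
  induction m with
  | zero => simp [wt2, Ofun, Efun]
  | succ m ih =>
    simp only [wt2, Ofun, Efun, card_filter, show 2 * (m + 1) = 2 * m + 1 + 1 from rfl,
      sum_range_succ] at ih ⊢
    rw [ih]
    ring

lemma Ofun_zero (m : ℕ) : Ofun m 0 = 0 := by simp [Ofun]

lemma Efun_zero (m : ℕ) : Efun m 0 = 0 := by simp [Efun]

lemma Ofun_four_pow_sub_one (m : ℕ) : Ofun m (4 ^ m - 1) = m := by
  rw [Ofun, filter_true_of_mem fun i hi => ?_, card_range]
  rw [Nat.four_pow_eq_two_pow_two_mul, Nat.testBit_two_pow_sub_one]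
  have := mem_range.mp hi
  simp only [decide_eq_true_eq]
  omega

lemma Efun_four_pow_sub_one (m : ℕ) : Efun m (4 ^ m - 1) = m := by
  rw [Efun, filter_true_of_mem fun i hi => ?_, card_range]
  rw [Nat.four_pow_eq_two_pow_two_mul, Nat.testBit_two_pow_sub_one]
  have := mem_range.mp hi
  simp only [decide_eq_true_eq]
  omega

def thetaIndices (m r k : ℕ) : Finset ℕ :=
  {u ∈ range (4 ^ m) | wt2 m u = 2 * m - r ∧ ((Ofun m u : ℤ) - Efun m u).natAbs = m - k}

lemma card_thetaIndices_of_lt {m r k : ℕ} (hk : k < m)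
    (hpar : (m - k) % 2 = r % 2) :
    #(thetaIndices m r k)
      = 2 * ibinom m (((m : ℤ) - r + k) / 2) * ibinom m (((k : ℤ) + r - m) / 2) := by
  set x : ℤ := ((m : ℤ) - r + k) / 2
  set y : ℤ := ((k : ℤ) + r - m) / 2
  have hx : 2 * x = m - r + k := by omega
  have hy : 2 * y = k + r - m := by omega
  have hsplit : thetaIndices m r k
      = {u ∈ range (4 ^ m) | (Ofun m u : ℤ) = m - y ∧ (Efun m u : ℤ) = x}
        ∪ {u ∈ range (4 ^ m) | (Ofun m u : ℤ) = x ∧ (Efun m u : ℤ) = m - y} := by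
    rw [← filter_or]
    refine filter_congr fun u _ => ?_
    rw [wt2_eq_Ofun_add_Efun]
    omega
  rw [hsplit, card_union_of_disjoint (disjoint_filter.mpr fun u _ _ => by omega),
    card_filter_Ofun_eq_Efun_eq_of_int, card_filter_Ofun_eq_Efun_eq_of_int, ibinom_sub_self]
  ring

lemma card_thetaIndices_self {m r : ℕ} (hr : r ≤ 2 * m) (hpar : r % 2 = 0) :
    #(thetaIndices m r m) = m.choose (r / 2) ^ 2 := by
  have hdiag : thetaIndices m r m
      = {u ∈ range (4 ^ m) | Ofun m u = m - r / 2 ∧ Efun m u = m - r / 2} := by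
    refine filter_congr fun u _ => ?_
    rw [wt2_eq_Ofun_add_Efun]
    omega
  rw [hdiag, card_filter_Ofun_eq_Efun_eq, Nat.choose_symm (by omega), sq]

namespace IsPrimitiveRoot

variable {M : Type*} [CommMonoid M] {ζ : M} {n : ℕ}

lemma eq_or_of_pow_eq_pow_of_le (hζ : IsPrimitiveRoot ζ n) {u v : ℕ} (hu : u ≤ n) (hv : v ≤ n)
    (h : ζ ^ u = ζ ^ v) : u = v ∨ (u = 0 ∧ v = n) ∨ (u = n ∧ v = 0) := by
  rcases hu.lt_or_eq with hu | rfl <;> rcases hv.lt_or_eq with hv | rfl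
  · exact .inl (hζ.pow_inj hu hv h)
  · rw [hζ.pow_eq_one] at h
    exact .inr (.inl ⟨Nat.eq_zero_of_dvd_of_lt ((hζ.pow_eq_one_iff_dvd u).mp h) hu, rfl⟩)
  · rw [hζ.pow_eq_one, eq_comm] at h
    exact .inr (.inr ⟨rfl, Nat.eq_zero_of_dvd_of_lt ((hζ.pow_eq_one_iff_dvd v).mp h) hv⟩)
  · exact .inl rfl

lemma image_pow_inter_image_pow (hζ : IsPrimitiveRoot ζ n) {P Q : ℕ → Prop}
    (hQ : Q 0 ↔ Q n) :
    (ζ ^ ·) '' {u | u ≤ n ∧ P u} ∩ (ζ ^ ·) '' {u | u ≤ n ∧ Q u}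
      = (ζ ^ ·) '' {u | u ≤ n ∧ P u ∧ Q u} := by
  refine Set.Subset.antisymm ?_ fun _ ⟨u, ⟨hu, hP, hQu⟩, hz⟩ => ⟨⟨u, ⟨hu, hP⟩, hz⟩, u, ⟨hu, hQu⟩, hz⟩
  rintro _ ⟨⟨u, ⟨hu, hP⟩, rfl⟩, v, ⟨hv, hQv⟩, h⟩
  refine ⟨u, ⟨hu, hP, ?_⟩, rfl⟩
  rcases hζ.eq_or_of_pow_eq_pow_of_le hv hu h with rfl | ⟨rfl, rfl⟩ | ⟨rfl, rfl⟩
  exacts [hQv, hQ.mp hQv, hQ.mpr hQv]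

lemma injOn_pow_setOf_le (hζ : IsPrimitiveRoot ζ n) {P : ℕ → Prop} (hP : ¬(P 0 ∧ P n)) :
    Set.InjOn (ζ ^ ·) {u | u ≤ n ∧ P u} := by
  rintro u ⟨hu, hPu⟩ v ⟨hv, hPv⟩ h
  rcases hζ.eq_or_of_pow_eq_pow_of_le hu hv h with huv | ⟨rfl, rfl⟩ | ⟨rfl, rfl⟩
  exacts [huv, (hP ⟨hPu, hPv⟩).elim, (hP ⟨hPv, hPu⟩).elim]

end IsPrimitiveRoot

lemma ThetaR_eq_image {M : Type*} [Monoid M] (m : ℕ) (ζ : M) (r : ℕ) :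
    ThetaR m ζ r = (ζ ^ ·) '' {u | u ≤ 4 ^ m - 1 ∧ wt2 m u = 2 * m - r} := by
  ext
  simp [ThetaR, eq_comm, and_assoc]

lemma ThetaK_eq_image {M : Type*} [Monoid M] (m : ℕ) (ζ : M) (k : ℕ) :
    ThetaK m ζ k
      = (ζ ^ ·) '' {u | u ≤ 4 ^ m - 1 ∧ ((Ofun m u : ℤ) - Efun m u).natAbs = m - k} := by
  ext
  simp [ThetaK, eq_comm, and_assoc]

lemma coe_thetaIndices (m r k : ℕ) :
    (thetaIndices m r k : Set ℕ) = {u | u ≤ 4 ^ m - 1 ∧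
      wt2 m u = 2 * m - r ∧ ((Ofun m u : ℤ) - Efun m u).natAbs = m - k} := by
  ext u
  simp [thetaIndices, Nat.lt_iff_le_pred (by positivity : 0 < 4 ^ m)]

theorem stmt6_general (m : ℕ) (hm : 1 ≤ m) (K : Type*) [Field K] (ζ : K)
    (hζ : IsPrimitiveRoot ζ (2 ^ (2 * m) - 1))
    (r k : ℕ) (hr : r ≤ 2 * m) (hpar : (m - k) % 2 = r % 2) :
    (k < m → (ThetaR m ζ r ∩ ThetaK m ζ k).ncard
        = 2 * ibinom m (((m : ℤ) - r + k) / 2) * ibinom m (((k : ℤ) + r - m) / 2)) ∧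
      (k = m → (ThetaR m ζ r ∩ ThetaK m ζ k).ncard = (Nat.choose m (r / 2)) ^ 2) := by
  rw [← Nat.four_pow_eq_two_pow_two_mul] at hζ
  have hweights : wt2 m 0 ≠ wt2 m (4 ^ m - 1) := by
    rw [wt2_eq_Ofun_add_Efun, wt2_eq_Ofun_add_Efun, Ofun_zero, Efun_zero, Ofun_four_pow_sub_one,
      Efun_four_pow_sub_one]
    omega
  have hcard : (ThetaR m ζ r ∩ ThetaK m ζ k).ncard = #(thetaIndices m r k) := by
    rw [ThetaR_eq_image, ThetaK_eq_image, hζ.image_pow_inter_image_pow (by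
      simp [Ofun_zero, Efun_zero, Ofun_four_pow_sub_one, Efun_four_pow_sub_one]),
      (hζ.injOn_pow_setOf_le fun h => hweights (h.1.1.trans h.2.1.symm)).ncard_image,
      ← coe_thetaIndices, Set.ncard_coe_finset]
  rw [hcard]
  exact ⟨fun hk => card_thetaIndices_of_lt hk hpar,
    by rintro rfl; exact card_thetaIndices_self hr (by simpa using hpar.symm)⟩

/-- Let `m ≥ 1`, `0 ≤ r ≤ 2m` and `0 ≤ k ≤ m` with `m - k ≡ r (mod 2)`.
If `k < m` then `|Θ^{(r)}_k| = 2·binom(m,(m-r+k)/2)·binom(m,(k+r-m)/2)`, and if `k = m`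
(so `r` is even) then `|Θ^{(r)}_m| = binom(m,r/2)²`. -/
theorem stmt6 (m : ℕ) (hm : 1 ≤ m) (K : Type*) [Field K] [Algebra (ZMod 2) K]
    [IsAlgClosure (ZMod 2) K] (ζ : K) (hζ : IsPrimitiveRoot ζ (2 ^ (2 * m) - 1))
    (r k : ℕ) (hr : r ≤ 2 * m) (hk : k ≤ m) (hpar : (m - k) % 2 = r % 2) :
    (k < m → (ThetaR m ζ r ∩ ThetaK m ζ k).ncard
        = 2 * ibinom m (((m : ℤ) - r + k) / 2) * ibinom m (((k : ℤ) + r - m) / 2)) ∧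
      (k = m → (ThetaR m ζ r ∩ ThetaK m ζ k).ncard = (Nat.choose m (r / 2)) ^ 2) :=
  stmt6_general m hm K ζ hζ r k hr hpar
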